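/- arXiv:1610.06816 — 2 statements merged into one kernel-verified Lean document; each statement's English description precedes it below -/
import Mathlib

section
/- Fix partitions μ and λ and a real number q > 1. Then the limit as n → ∞ of q^{-2n²} · Σ_{(ν,κ) a double partition of n} N(n,q,ν,κ) · binom(ν,μ) · binom(κ,λ) exists and equals (1/(v_μ v_λ)) · ∏_{r≥1} (q^r/(q^r-1))^{n_r(μ)} · ∏_{r≥1} (q^r/(q^r+1))^{n_r(λ)}. (For q a prime power this is the stable mean of the polynomial statistic (X choose μ)(Y choose λ) over the q^{2n²} F-stable maximal tori of Sp_{2n} or SO_{2n+1} over the algebraic closure of F_q.) -/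
open Finset Filter

/-- `v_μ = ∏_{r≥1} n_r(μ)! · (2r)^{n_r(μ)}`, where `n_r(μ)` is the number of parts of `μ`
equal to `r`.  Here a partition is encoded by its multiset of parts. -/
def vOf (mu : Multiset ℕ) : ℕ :=
  ∏ r ∈ mu.toFinset, Nat.factorial (mu.count r) * (2 * r) ^ (mu.count r)

/-- `binom(ν,μ) = ∏_{r≥1} C(n_r(ν), n_r(μ))`. -/
def binomOf (nu mu : Multiset ℕ) : ℕ :=
  ∏ r ∈ mu.toFinset, Nat.choose (nu.count r) (mu.count r)

/-- `|Sp_{2n}(F_q)| = q^{n²} ∏_{i=1}^n (q^{2i} - 1)`, for a real parameter `q`. -/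
noncomputable def Spcard (q : ℝ) (n : ℕ) : ℝ :=
  q ^ (n ^ 2) * ∏ i ∈ Finset.Icc 1 n, (q ^ (2 * i) - 1)

/-- `N(n,q,ν,κ) = |Sp_{2n}(F_q)| / (v_ν v_κ ∏_{r≥1} (q^r-1)^{n_r(ν)} (q^r+1)^{n_r(κ)})`,
the Springer–Steinberg count of F-stable maximal tori of `Sp_{2n}` (or `SO_{2n+1}`) of type
`(ν,κ)`, taken as a definition for real `q`; here `n = |ν| + |κ|`. -/
noncomputable def NBC (q : ℝ) (n : ℕ) {a b : ℕ} (nu : Nat.Partition a)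
    (ka : Nat.Partition b) : ℝ :=
  Spcard q n /
    ((vOf nu.parts : ℝ) * (vOf ka.parts : ℝ) *
      (∏ r ∈ nu.parts.toFinset, (q ^ r - 1) ^ (nu.parts.count r)) *
      (∏ r ∈ ka.parts.toFinset, (q ^ r + 1) ^ (ka.parts.count r)))

/-!
Write `N(n,q,ν,κ) = |Sp_{2n}(F_q)| · w_s(ν) · w_t(κ)` with exponential-formula weights
`w_φ(ν) = ∏_r φ_r^{n_r(ν)} / n_r(ν)!`, where `s_r = 1/(2r(q^r-1))` and `t_r = 1/(2r(q^r+1))`.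
Splitting off a copy of `μ` from `ν` gives `∑_{ν ⊢ k} binom(ν,μ) w(ν) = w(μ) a_{k-|μ|}`, where
`a_k = ∑_{ν ⊢ k} w(ν)` is the `k`-th coefficient of `exp (∑_r φ_r X^r)`. So the sum at `n` is
`|Sp_{2n}| w_s(μ) w_t(λ)` times the coefficient of `X^{n-|μ|-|λ|}` in
`D = exp (∑_r (s_r + t_r) X^r)`.
As `r (s_r + t_r) = ∑_{j ≥ 0} q^{-(2j+1) r}`, `D(X) = D(X/q²)/(1 - X/q)`, whence
`[X^N] D = q^{-N} / ∏_{i ≤ N} (1 - q^{-2i})`; the functional equation holds because both sides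
solve `X f' = W f` with `W = ∑_r r (s_r + t_r) X^r`, whose solutions are determined by `f(0)`.
After division by `q^{2n²}` only `w_s(μ) w_t(λ) q^{|μ|+|λ|} ∏_{n-|μ|-|λ| < i ≤ n} (1 - q^{-2i})`
remains, and the product tends to `1`.
-/

open PowerSeries

lemma binomOf_eq_zero_of_not_le {m M : Multiset ℕ} (h : ¬ M ≤ m) : binomOf m M = 0 := by
  obtain ⟨r, hr⟩ : ∃ r, m.count r < M.count r := by
    simpa [Multiset.le_iff_count] using h
  exact prod_eq_zero (Multiset.mem_toFinset.2 (Multiset.count_pos.1 (by omega)))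
    (Nat.choose_eq_zero_of_lt hr)

lemma binomOf_singleton (m : Multiset ℕ) (r : ℕ) : binomOf m {r} = m.count r := by
  simp [binomOf]

section ExpWeight

variable {K : Type*} [Field K]

noncomputable def expWeight (φ : ℕ → K) (m : Multiset ℕ) : K :=
  ∏ r ∈ m.toFinset, φ r ^ m.count r / (m.count r).factorial

noncomputable def partitionSum (φ : ℕ → K) (k : ℕ) : K :=
  ∑ ν : Nat.Partition k, expWeight φ ν.parts

lemma expWeight_eq_prod_of_subset (φ : ℕ → K) {m : Multiset ℕ} {S : Finset ℕ}
    (h : m.toFinset ⊆ S) :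
    expWeight φ m = ∏ r ∈ S, φ r ^ m.count r / (m.count r).factorial :=
  prod_subset h fun r _ hr => by simp [Multiset.count_eq_zero.2 (by simpa using hr)]

lemma expWeight_singleton (φ : ℕ → K) (r : ℕ) : expWeight φ {r} = φ r := by
  simp [expWeight]

lemma partitionSum_zero (φ : ℕ → K) : partitionSum φ 0 = 1 := by
  simp [partitionSum, expWeight]

lemma expWeight_one_div_two_mul (g : ℕ → K) (m : Multiset ℕ) :
    expWeight (fun r => 1 / (2 * r * g r)) m
      = (∏ r ∈ m.toFinset, (g r)⁻¹ ^ m.count r) / vOf m := by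
  rw [expWeight, vOf, Nat.cast_prod, ← prod_div_distrib]
  refine prod_congr rfl fun r _ => ?_
  simp only [Nat.cast_mul, Nat.cast_pow, Nat.cast_ofNat, div_eq_mul_inv, one_mul, mul_inv,
    mul_pow, inv_pow]
  ring

lemma binomOf_mul_expWeight [CharZero K] (φ : ℕ → K) {M m : Multiset ℕ} (h : M ≤ m) :
    (binomOf m M : K) * expWeight φ m = expWeight φ M * expWeight φ (m - M) := by
  have hM : M.toFinset ⊆ m.toFinset := Multiset.toFinset_subset.2 (Multiset.subset_of_le h)
  have hmM : (m - M).toFinset ⊆ m.toFinset :=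
    Multiset.toFinset_subset.2 (Multiset.subset_of_le (Multiset.sub_le_self m M))
  rw [binomOf, Nat.cast_prod, prod_subset hM fun r _ hr => by
      simp [Multiset.count_eq_zero.2 (by simpa using hr)],
    expWeight_eq_prod_of_subset φ subset_rfl, expWeight_eq_prod_of_subset φ hM,
    expWeight_eq_prod_of_subset φ hmM, ← prod_mul_distrib, ← prod_mul_distrib]
  refine prod_congr rfl fun r _ => ?_
  have hle : M.count r ≤ m.count r := Multiset.count_le_of_le r h
  rw [Multiset.count_sub, Nat.cast_choose K hle, ← Nat.sub_add_cancel hle, pow_add,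
    Nat.add_sub_cancel]
  have : ((m.count r - M.count r + M.count r).factorial : K) ≠ 0 :=
    Nat.cast_ne_zero.2 (Nat.factorial_ne_zero _)
  field_simp

lemma sum_binomOf_mul_expWeight [CharZero K] (φ : ℕ → K) {M : Multiset ℕ}
    (hM : ∀ i ∈ M, 0 < i) (k : ℕ) :
    ∑ ν : Nat.Partition k, (binomOf ν.parts M : K) * expWeight φ ν.parts
      = if M.sum ≤ k then expWeight φ M * partitionSum φ (k - M.sum) else 0 := by
  split_ifs with hk
  swap
  · refine sum_eq_zero fun ν _ => ?_
    have : ¬ M ≤ ν.parts := fun hle => hk <| by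
      obtain ⟨t, ht⟩ := Multiset.le_iff_exists_add.1 hle
      rw [← ν.parts_sum, ht, Multiset.sum_add]
      omega
    simp [binomOf_eq_zero_of_not_le this]
  rw [partitionSum, mul_sum, ← sum_filter_of_ne (p := fun ν : Nat.Partition k => M ≤ ν.parts)
    fun ν _ hν => by_contra fun hle => hν (by simp [binomOf_eq_zero_of_not_le hle])]
  refine sum_bij' (fun ν hν => ⟨ν.parts - M, fun hi => ν.parts_pos (Multiset.mem_of_le
      (Multiset.sub_le_self _ _) hi), ?_⟩)
    (fun ρ _ => ⟨M + ρ.parts, ?_, ?_⟩) (by simp) (by simp) ?_ ?_ ?_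
  · have hle : M ≤ ν.parts := (mem_filter.1 hν).2
    have := congrArg Multiset.sum (tsub_add_cancel_of_le hle)
    rw [Multiset.sum_add, ν.parts_sum] at this
    omega
  · intro i hi
    rcases Multiset.mem_add.1 hi with h | h
    exacts [hM i h, ρ.parts_pos h]
  · rw [Multiset.sum_add, ρ.parts_sum]
    omega
  · intro ν hν
    exact Nat.Partition.ext (add_tsub_cancel_of_le (mem_filter.1 hν).2)
  · intro ρ _
    exact Nat.Partition.ext (add_tsub_cancel_left M ρ.parts :)
  · intro ν hν
    exact binomOf_mul_expWeight φ (mem_filter.1 hν).2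

lemma mk_sum_binomOf_mul_expWeight [CharZero K] (φ : ℕ → K) {M : Multiset ℕ}
    (hM : ∀ i ∈ M, 0 < i) :
    PowerSeries.mk (fun k => ∑ ν : Nat.Partition k, (binomOf ν.parts M : K) * expWeight φ ν.parts)
      = C (expWeight φ M) * X ^ M.sum * PowerSeries.mk (partitionSum φ) := by
  ext k
  rw [coeff_mk, sum_binomOf_mul_expWeight φ hM, mul_comm (C _), mul_assoc, coeff_X_pow_mul',
    coeff_C_mul, coeff_mk]

lemma sum_count_mul_expWeight [CharZero K] (φ : ℕ → K) {r : ℕ}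
    (hr : 0 < r) (k : ℕ) :
    ∑ ν : Nat.Partition k, (ν.parts.count r : K) * expWeight φ ν.parts
      = if r ≤ k then φ r * partitionSum φ (k - r) else 0 := by
  simpa [binomOf_singleton, expWeight_singleton] using
    sum_binomOf_mul_expWeight φ (M := {r}) (by simpa using hr) k

lemma Nat.Partition.sum_count_mul {k : ℕ} (ν : Nat.Partition k) :
    ∑ r ∈ range (k + 1), ν.parts.count r * r = k := by
  have hsub : ν.parts.toFinset ⊆ range (k + 1) := fun r hr => mem_range.2 <| Nat.lt_succ_of_le <|
    ν.parts_sum ▸ Multiset.le_sum_of_mem (Multiset.mem_toFinset.1 hr)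
  rw [← sum_subset hsub fun r _ hr => by simp [Multiset.count_eq_zero.2 (by simpa using hr)]]
  simpa [smul_eq_mul] using (Finset.sum_multiset_count ν.parts).symm.trans ν.parts_sum

lemma natCast_mul_partitionSum [CharZero K] (φ : ℕ → K) (k : ℕ) :
    (k : K) * partitionSum φ k
      = ∑ r ∈ range (k + 1), (r * φ r) * partitionSum φ (k - r) := by
  have hk : ∀ ν : Nat.Partition k, (k : K) * expWeight φ ν.parts
      = ∑ r ∈ range (k + 1), r * ((ν.parts.count r : K) * expWeight φ ν.parts) := by
    intro ν
    have hcast : (k : K) = ∑ r ∈ range (k + 1), (ν.parts.count r : K) * r := by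
      exact_mod_cast ν.sum_count_mul.symm
    rw [hcast, sum_mul]
    exact sum_congr rfl fun r _ => by ring
  rw [partitionSum, mul_sum, sum_congr rfl fun ν _ => hk ν, sum_comm]
  refine sum_congr rfl fun r hr => ?_
  rcases Nat.eq_zero_or_pos r with rfl | hr0
  · simp
  rw [← mul_sum, sum_count_mul_expWeight φ hr0, if_pos (Nat.lt_succ_iff.1 (mem_range.1 hr))]
  ring

end ExpWeight

section EulerOperator

variable {R : Type*} [CommRing R]

noncomputable def eulerOp (f : R⟦X⟧) : R⟦X⟧ := X * d⁄dX R f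

lemma coeff_eulerOp (f : R⟦X⟧) (n : ℕ) : coeff n (eulerOp f) = n * coeff n f := by
  rcases n with _ | n
  · simp [eulerOp]
  · rw [eulerOp, coeff_succ_X_mul, coeff_derivative, mul_comm]
    push_cast
    rfl

lemma eulerOp_mul (f g : R⟦X⟧) : eulerOp (f * g) = eulerOp f * g + f * eulerOp g := by
  simp only [eulerOp, Derivation.leibniz, smul_eq_mul]
  ring

lemma eulerOp_rescale (a : R) (f : R⟦X⟧) : eulerOp (rescale a f) = rescale a (eulerOp f) := by
  ext n
  simp only [coeff_eulerOp, coeff_rescale]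
  ring

lemma one_sub_C_mul_X_mul_rescale_mk_one (a : R) :
    (1 - C a * X) * rescale a (PowerSeries.mk 1) = 1 := by
  simpa [rescale_X, mul_comm] using congrArg (rescale a) (mk_one_mul_one_sub_eq_one (S := R))

lemma eulerOp_rescale_mk_one (a : R) :
    eulerOp (rescale a (PowerSeries.mk 1))
      = (rescale a (PowerSeries.mk 1) - 1) * rescale a (PowerSeries.mk 1) := by
  set G := rescale a (PowerSeries.mk 1)
  have h := one_sub_C_mul_X_mul_rescale_mk_one a
  have h' := congrArg (d⁄dX R) h
  simp only [Derivation.leibniz, map_sub, derivative_one, derivative_C, derivative_X,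
    smul_eq_mul] at h'
  rw [eulerOp]
  linear_combination (X * G) * h' - (G + X * d⁄dX R G) * h

end EulerOperator

section CharZero

variable {K : Type*} [Field K] [CharZero K]

lemma eulerOp_mk_partitionSum (φ : ℕ → K) :
    eulerOp (PowerSeries.mk (partitionSum φ))
      = PowerSeries.mk (fun r => r * φ r) * PowerSeries.mk (partitionSum φ) := by
  ext k
  rw [coeff_eulerOp, coeff_mk, natCast_mul_partitionSum, coeff_mul,
    Nat.sum_antidiagonal_eq_sum_range_succ
      (fun i j => coeff i (PowerSeries.mk _) * coeff j (PowerSeries.mk _))]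
  simp only [coeff_mk]

lemma eq_of_eulerOp_eq_mul {W f g : K⟦X⟧}
    (hW : constantCoeff W = 0) (hf : eulerOp f = W * f) (hg : eulerOp g = W * g)
    (h0 : constantCoeff f = constantCoeff g) : f = g := by
  ext n
  induction n using Nat.strong_induction_on with
  | _ n ih =>
    rcases Nat.eq_zero_or_pos n with rfl | hn
    · simpa using h0
    have key : (n : K) * coeff n f = n * coeff n g := by
      rw [← coeff_eulerOp, ← coeff_eulerOp, hf, hg, coeff_mul, coeff_mul]
      refine sum_congr rfl fun ij hij => ?_
      rcases Nat.eq_zero_or_pos ij.1 with h | h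
      · simp [h, hW]
      · rw [ih ij.2 (by have := mem_antidiagonal.1 hij; omega)]
    exact mul_left_cancel₀ (Nat.cast_ne_zero.2 hn.ne') key

lemma one_sub_C_mul_X_mul_eq_rescale {a c : K} {W D : K⟦X⟧} (hW0 : constantCoeff W = 0)
    (hD : eulerOp D = W * D)
    (hW : rescale c W + (rescale a (PowerSeries.mk 1) - 1) = W) :
    (1 - C a * X) * D = rescale c D := by
  set G := rescale a (PowerSeries.mk 1)
  have hH : eulerOp (rescale c D * G) = W * (rescale c D * G) := by
    rw [eulerOp_mul, eulerOp_rescale, hD, map_mul, eulerOp_rescale_mk_one]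
    linear_combination (rescale c D * G) * hW
  have hD_eq : D = rescale c D * G := eq_of_eulerOp_eq_mul hW0 hD hH <| by
    simp only [G, map_mul, ← coeff_zero_eq_constantCoeff_apply, coeff_rescale, coeff_mk]
    simp
  rw [hD_eq, ← mul_assoc, mul_comm _ (rescale c D), mul_assoc,
    one_sub_C_mul_X_mul_rescale_mk_one, mul_one, ← hD_eq]

end CharZero

section QPochhammer

variable {R : Type*} [CommRing R]

/-- The `q`-Pochhammer symbol `(y; y)ₙ`. -/
def qPochhammer (y : R) (n : ℕ) : R := ∏ i ∈ range n, (1 - y ^ (i + 1))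

lemma qPochhammer_succ (y : R) (n : ℕ) :
    qPochhammer y (n + 1) = qPochhammer y n * (1 - y ^ (n + 1)) :=
  prod_range_succ _ n

lemma qPochhammer_add (y : R) (m d : ℕ) :
    qPochhammer y (m + d) = qPochhammer y m * ∏ j ∈ range d, (1 - y ^ (m + j + 1)) :=
  prod_range_add _ m d

lemma coeff_mul_qPochhammer {a c : R} {D : R⟦X⟧}
    (h : (1 - C a * X) * D = rescale c D) (n : ℕ) :
    coeff n D * qPochhammer c n = a ^ n * constantCoeff D := by
  induction n with
  | zero => simp [qPochhammer]
  | succ n ih =>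
    have hn := congrArg (coeff (n + 1)) h
    rw [sub_mul, one_mul, mul_assoc, map_sub, coeff_C_mul, coeff_succ_X_mul, coeff_rescale] at hn
    rw [qPochhammer_succ]
    linear_combination (qPochhammer c n) * hn + a * ih

end QPochhammer

lemma prod_pow_div_pow_count {K : Type*} [Field K] (x : K) (g : ℕ → K) (m : Multiset ℕ) :
    ∏ r ∈ m.toFinset, (x ^ r / g r) ^ m.count r
      = x ^ m.sum * ∏ r ∈ m.toFinset, (g r)⁻¹ ^ m.count r := by
  have hx : ∏ r ∈ m.toFinset, (x ^ r) ^ m.count r = x ^ m.sum := by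
    rw [← prod_multiset_map_count]
    induction m using Multiset.induction_on with
    | empty => simp
    | cons a m ih => simp [ih, pow_add]
  simp only [div_eq_mul_inv, mul_pow, prod_mul_distrib, hx]

lemma Spcard_eq {q : ℝ} (hq : q ≠ 0) (n : ℕ) :
    Spcard q n = q ^ (2 * n ^ 2 + n) * qPochhammer (q⁻¹ ^ 2) n := by
  have hprod : ∀ n : ℕ, ∏ i ∈ Icc 1 n, (q ^ (2 * i) - 1)
      = q ^ (n * (n + 1)) * qPochhammer (q⁻¹ ^ 2) n := by
    intro n
    induction n with
    | zero => simp [qPochhammer]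
    | succ n ih =>
      have h : q ^ (2 * (n + 1)) * (q⁻¹ ^ 2) ^ (n + 1) = 1 := by
        rw [← pow_mul, inv_pow, mul_inv_cancel₀ (pow_ne_zero _ hq)]
      rw [prod_Icc_succ_top (by omega), ih, qPochhammer_succ,
        show (n + 1) * (n + 1 + 1) = n * (n + 1) + 2 * (n + 1) by ring, pow_add]
      linear_combination (q ^ (n * (n + 1)) * qPochhammer (q⁻¹ ^ 2) n) * h
  rw [Spcard, hprod, ← mul_assoc, ← pow_add]
  ring_nf

section Torus

variable (q : ℝ)

noncomputable def splitWeight (r : ℕ) : ℝ := 1 / (2 * r * (q ^ r - 1))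

noncomputable def nonsplitWeight (r : ℕ) : ℝ := 1 / (2 * r * (q ^ r + 1))

noncomputable def torusSeries : ℝ⟦X⟧ :=
  PowerSeries.mk (partitionSum (splitWeight q)) * PowerSeries.mk (partitionSum (nonsplitWeight q))

lemma NBC_eq (n : ℕ) {a b : ℕ} (ν : Nat.Partition a) (κ : Nat.Partition b) :
    NBC q n ν κ
      = Spcard q n * expWeight (splitWeight q) ν.parts * expWeight (nonsplitWeight q) κ.parts := by
  have hs : expWeight (splitWeight q) ν.parts = _ := expWeight_one_div_two_mul _ _
  have ht : expWeight (nonsplitWeight q) κ.parts = _ := expWeight_one_div_two_mul _ _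
  rw [NBC, hs, ht]
  simp only [inv_pow, prod_inv_distrib, div_eq_mul_inv, mul_inv]
  ring

lemma eulerOp_torusSeries :
    eulerOp (torusSeries q)
      = PowerSeries.mk (fun r => r * (splitWeight q r + nonsplitWeight q r)) * torusSeries q := by
  have hW : PowerSeries.mk (fun r => r * (splitWeight q r + nonsplitWeight q r))
      = PowerSeries.mk (fun r => r * splitWeight q r)
        + PowerSeries.mk (fun r => r * nonsplitWeight q r) := by
    ext r
    simp [mul_add]
  rw [torusSeries, eulerOp_mul, eulerOp_mk_partitionSum, eulerOp_mk_partitionSum, hW]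
  ring

variable {q}

/-- With `w_r = r (s_r + t_r) = q^r / (q^{2r} - 1)` this reads `q^{-2r} w_r + q^{-r} = w_r`. -/
lemma rescale_torusWeight_add (hq : 1 < q) :
    rescale (q⁻¹ ^ 2) (PowerSeries.mk fun r => r * (splitWeight q r + nonsplitWeight q r))
        + (rescale q⁻¹ (PowerSeries.mk 1) - 1)
      = PowerSeries.mk fun r => r * (splitWeight q r + nonsplitWeight q r) := by
  ext r
  simp only [map_add, map_sub, coeff_rescale, coeff_mk, Pi.one_apply, mul_one, coeff_one]
  rcases Nat.eq_zero_or_pos r with rfl | hr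
  · simp
  have h1 : 1 < q ^ r := one_lt_pow₀ hq hr.ne'
  have h2 : q ^ r - 1 ≠ 0 := by linarith
  have h3 : q ^ r + 1 ≠ 0 := by linarith
  have h4 : (r : ℝ) ≠ 0 := by positivity
  have h5 : q ≠ 0 := by positivity
  simp only [if_neg hr.ne', sub_zero, splitWeight, nonsplitWeight, ← pow_mul, inv_pow]
  field_simp
  ring

lemma coeff_torusSeries_mul_qPochhammer (hq : 1 < q) (n : ℕ) :
    coeff n (torusSeries q) * qPochhammer (q⁻¹ ^ 2) n = q⁻¹ ^ n := by
  have h := one_sub_C_mul_X_mul_eq_rescale (by simp) (eulerOp_torusSeries q)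
    (rescale_torusWeight_add hq)
  rw [coeff_mul_qPochhammer h, torusSeries, map_mul]
  simp only [← coeff_zero_eq_constantCoeff_apply, coeff_mk, partitionSum_zero, mul_one]

end Torus

lemma sum_NBC_mul_binomOf (q : ℝ) {A B : ℕ} (mu : Nat.Partition A) (lam : Nat.Partition B)
    (n : ℕ) :
    ∑ k ∈ range (n + 1), ∑ nu : Nat.Partition k, ∑ ka : Nat.Partition (n - k),
        NBC q n nu ka * (binomOf nu.parts mu.parts : ℝ) * (binomOf ka.parts lam.parts : ℝ)
      = Spcard q n * coeff n (C (expWeight (splitWeight q) mu.parts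
          * expWeight (nonsplitWeight q) lam.parts) * X ^ (A + B) * torusSeries q) := by
  have hseries : C (expWeight (splitWeight q) mu.parts * expWeight (nonsplitWeight q) lam.parts)
        * X ^ (A + B) * torusSeries q
      = PowerSeries.mk (fun k => ∑ ν : Nat.Partition k,
            (binomOf ν.parts mu.parts : ℝ) * expWeight (splitWeight q) ν.parts)
        * PowerSeries.mk (fun k => ∑ κ : Nat.Partition k,
            (binomOf κ.parts lam.parts : ℝ) * expWeight (nonsplitWeight q) κ.parts) := by
    rw [mk_sum_binomOf_mul_expWeight _ fun _ => mu.parts_pos,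
      mk_sum_binomOf_mul_expWeight _ fun _ => lam.parts_pos, mu.parts_sum, lam.parts_sum,
      torusSeries, map_mul, pow_add]
    ring
  rw [hseries, coeff_mul, Nat.sum_antidiagonal_eq_sum_range_succ
    (fun i j => coeff i (PowerSeries.mk _) * coeff j (PowerSeries.mk _)), mul_sum]
  refine sum_congr rfl fun k _ => ?_
  rw [coeff_mk, coeff_mk, sum_mul_sum, mul_sum]
  refine sum_congr rfl fun ν _ => ?_
  rw [mul_sum]
  refine sum_congr rfl fun κ _ => ?_
  rw [NBC_eq]
  ring

lemma tendsto_prod_one_sub_pow_add {y : ℝ} (hy : |y| < 1) (d : ℕ) :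
    Tendsto (fun m : ℕ => ∏ j ∈ range d, (1 - y ^ (m + j + 1))) atTop (nhds 1) := by
  have h : ∀ j, Tendsto (fun m : ℕ => 1 - y ^ (m + j + 1)) atTop (nhds 1) := fun j => by
    simpa [add_assoc] using ((tendsto_pow_atTop_nhds_zero_of_abs_lt_one hy).comp
      (tendsto_add_atTop_nat (j + 1))).const_sub 1
  simpa using tendsto_finsetProd (range d) fun j _ => h j

lemma stable_mean_value_eq {A B : ℕ} (q : ℝ) (mu : Nat.Partition A) (lam : Nat.Partition B) :
    1 / ((vOf mu.parts : ℝ) * (vOf lam.parts : ℝ))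
        * (∏ r ∈ mu.parts.toFinset, (q ^ r / (q ^ r - 1)) ^ (mu.parts.count r))
        * (∏ r ∈ lam.parts.toFinset, (q ^ r / (q ^ r + 1)) ^ (lam.parts.count r))
      = expWeight (splitWeight q) mu.parts * expWeight (nonsplitWeight q) lam.parts
        * q ^ (A + B) := by
  have hs : expWeight (splitWeight q) mu.parts = _ := expWeight_one_div_two_mul _ _
  have ht : expWeight (nonsplitWeight q) lam.parts = _ := expWeight_one_div_two_mul _ _
  rw [prod_pow_div_pow_count, prod_pow_div_pow_count, mu.parts_sum, lam.parts_sum, hs, ht, pow_add]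
  ring

lemma one_div_pow_mul_sum_NBC_mul_binomOf_add {A B : ℕ} {q : ℝ} (hq : 1 < q)
    (mu : Nat.Partition A) (lam : Nat.Partition B) (m : ℕ) :
    1 / q ^ (2 * (m + (A + B)) ^ 2) * ∑ k ∈ range (m + (A + B) + 1),
        ∑ nu : Nat.Partition k, ∑ ka : Nat.Partition (m + (A + B) - k),
          NBC q (m + (A + B)) nu ka * (binomOf nu.parts mu.parts : ℝ)
            * (binomOf ka.parts lam.parts : ℝ)
      = expWeight (splitWeight q) mu.parts * expWeight (nonsplitWeight q) lam.parts
        * q ^ (A + B) * ∏ j ∈ range (A + B), (1 - (q⁻¹ ^ 2) ^ (m + j + 1)) := by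
  have hq0 : q ≠ 0 := by positivity
  have hD := coeff_torusSeries_mul_qPochhammer hq m
  have hqm : q ^ m * q⁻¹ ^ m = 1 := by rw [← mul_pow, mul_inv_cancel₀ hq0, one_pow]
  rw [sum_NBC_mul_binomOf, mul_assoc, coeff_C_mul, coeff_X_pow_mul', if_pos le_add_self,
    Nat.add_sub_cancel, Spcard_eq hq0, qPochhammer_add, pow_add, pow_add]
  set N := q ^ (2 * (m + (A + B)) ^ 2)
  have hN : 1 / N * N = 1 := one_div_mul_cancel (pow_ne_zero _ hq0)
  set W := expWeight (splitWeight q) mu.parts * expWeight (nonsplitWeight q) lam.parts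
  set R := ∏ j ∈ range (A + B), (1 - (q⁻¹ ^ 2) ^ (m + j + 1))
  set D := coeff m (torusSeries q)
  linear_combination (q ^ m * q ^ (A + B) * qPochhammer (q⁻¹ ^ 2) m * R * W * D) * hN
    + (W * q ^ (A + B) * q ^ m * R) * hD + (W * q ^ (A + B) * R) * hqm

/-- **Theorem 1.2(ii)**: the stable mean of the polynomial statistic
`(X choose μ)(Y choose λ)` over the `q^{2n²}` F-stable maximal tori of
`Sp_{2n}(\bar F_q)` or `SO_{2n+1}(\bar F_q)` is
`(1/(v_μ v_λ)) ∏_{r≥1} (q^r/(q^r-1))^{n_r(μ)} ∏_{r≥1} (q^r/(q^r+1))^{n_r(λ)}`.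
The sum over double partitions `(ν,κ)` of `n` is realized as a sum over `k ≤ n`,
`ν` a partition of `k` and `κ` a partition of `n - k`. -/
theorem stable_mean_typeBC (A B : ℕ) (mu : Nat.Partition A) (lam : Nat.Partition B)
    (q : ℝ) (hq : 1 < q) :
    Tendsto
      (fun n : ℕ =>
        (1 / q ^ (2 * n ^ 2)) *
          ∑ k ∈ Finset.range (n + 1), ∑ nu : Nat.Partition k, ∑ ka : Nat.Partition (n - k),
            NBC q n nu ka * (binomOf nu.parts mu.parts : ℝ) * (binomOf ka.parts lam.parts : ℝ))
      atTop
      (nhds ((1 / ((vOf mu.parts : ℝ) * (vOf lam.parts : ℝ))) *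
        (∏ r ∈ mu.parts.toFinset, (q ^ r / (q ^ r - 1)) ^ (mu.parts.count r)) *
        (∏ r ∈ lam.parts.toFinset, (q ^ r / (q ^ r + 1)) ^ (lam.parts.count r)))) := by
  have hy : |q⁻¹ ^ 2| < 1 := by
    rw [abs_of_pos (by positivity)]
    exact pow_lt_one₀ (by positivity) (inv_lt_one_of_one_lt₀ hq) two_ne_zero
  rw [stable_mean_value_eq, ← tendsto_add_atTop_iff_nat (A + B), ← mul_one (_ * q ^ (A + B))]
  exact ((tendsto_prod_one_sub_pow_add hy (A + B)).const_mul _).congr fun m =>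
    (one_div_pow_mul_sum_NBC_mul_binomOf_add hq mu lam m).symm
end

section
/- Fix a double partition (μ,λ). For a real number z with |z| < 1 and n ≥ 0, let f_n(z) := Σ over double partitions (ν,κ) of n of binom(ν,μ)·binom(κ,λ)/(v_ν v_κ) · ∏_{r≥1} (1-z^r)^{-n_r(ν)} (1+z^r)^{-n_r(κ)} (a finite sum of real numbers; all factors 1±z^r are positive). Then for every real z with |z| ≤ 1/2 and every n ≥ 1, f_{n-1}(z) ≤ f_n(z); i.e. the sequence (f_n(z))_{n≥0} is monotone nondecreasing. -/
open Finset

/-- `f_n(z) = Σ_{(ν,κ) ⊢ n} binom(ν,μ)binom(κ,λ)/(v_ν v_κ) ·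
∏_{r≥1} (1-z^r)^{-n_r(ν)} (1+z^r)^{-n_r(κ)}`, a finite sum of real numbers; the sum over
double partitions of `n` is realized as a sum over `k ≤ n`, `ν ⊢ k`, `κ ⊢ n - k`. -/
noncomputable def fEval (muP lamP : Multiset ℕ) (n : ℕ) (z : ℝ) : ℝ :=
  ∑ k ∈ Finset.range (n + 1), ∑ nu : Nat.Partition k, ∑ ka : Nat.Partition (n - k),
    ((binomOf nu.parts muP : ℝ) * (binomOf ka.parts lamP : ℝ)) /
        ((vOf nu.parts : ℝ) * (vOf ka.parts : ℝ)) *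
      (∏ r ∈ nu.parts.toFinset, ((1 - z ^ r)⁻¹) ^ (nu.parts.count r)) *
      (∏ r ∈ ka.parts.toFinset, ((1 + z ^ r)⁻¹) ^ (ka.parts.count r))


/-! Write `c_r = 1/(2r(1 - z^r))` and `d_r = 1/(2r(1 + z^r))`. For `ν ⊇ μ` the summand
`binom(ν,μ)/v_ν · ∏ (1 - z^r)^{-n_r(ν)}` factors as `w_c(μ) w_c(ν - μ)` with
`w_c(s) = ∏ c_r^{n_r}/n_r!`, and `∑_{ρ ⊢ m} w_c(ρ)` is the coefficient of `x^m` in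
`exp (∑ c_r x^r)`. Hence `f_n(z) = w_c(μ) w_d(λ) · [x^{n-A-B}] exp (∑ (c_r + d_r) x^r)`.
Now `c_r + d_r = 1/(r(1 - z^{2r})) = 1/r + δ_r` with `δ_r ≥ 0` for `|z| < 1`, and
`exp (∑ x^r/r) = 1/(1 - x)`, so these coefficients are the partial sums of the nonnegative
coefficients of `exp (∑ δ_r x^r)`, which increase with `n`. -/

noncomputable section

namespace PowerSeries

lemma coeff_mk_mul_mk (g h : ℕ → ℝ) (m : ℕ) :
    coeff m (mk g * mk h) = ∑ k ∈ range (m + 1), g k * h (m - k) := by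
  rw [coeff_mul,
    Nat.sum_antidiagonal_eq_sum_range_succ (fun i j => coeff i (mk g) * coeff j (mk h))]
  simp only [coeff_mk]

lemma coeff_X_mul_derivative (f : PowerSeries ℝ) (m : ℕ) :
    coeff m (X * d⁄dX ℝ f) = m * coeff m f := by
  cases m with
  | zero => simp
  | succ k =>
    rw [coeff_succ_X_mul, coeff_derivative]
    push_cast
    ring

end PowerSeries

open PowerSeries

/-- `A` is the coefficient sequence of `exp (∑ γ_r x^r)`: this is the equation
`x A' = (∑ r γ_r x^r) A`, read coefficientwise. -/
def IsExpCoeffs (A γ : ℕ → ℝ) : Prop :=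
  A 0 = 1 ∧ ∀ m : ℕ, m * A m = ∑ r ∈ range (m + 1), r * γ r * A (m - r)

lemma isExpCoeffs_iff {A γ : ℕ → ℝ} : IsExpCoeffs A γ ↔
    A 0 = 1 ∧ X * d⁄dX ℝ (PowerSeries.mk A) =
      PowerSeries.mk (fun r => r * γ r) * PowerSeries.mk A := by
  refine and_congr_right fun _ => ⟨fun h => ?_, fun h m => ?_⟩
  · ext m
    rw [coeff_X_mul_derivative, coeff_mk, coeff_mk_mul_mk, h m]
  · rw [← coeff_mk_mul_mk, ← h, coeff_X_mul_derivative, coeff_mk]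

namespace IsExpCoeffs

variable {A B α β : ℕ → ℝ}

lemma unique (hA : IsExpCoeffs A α) (hB : IsExpCoeffs B α) : A = B := by
  funext m
  induction m using Nat.strong_induction_on with
  | _ m ih =>
    cases m with
    | zero => rw [hA.1, hB.1]
    | succ k =>
      have hk : ((k + 1 : ℕ) : ℝ) ≠ 0 := Nat.cast_ne_zero.2 k.succ_ne_zero
      refine mul_left_cancel₀ hk ((hA.2 _).trans (Eq.trans ?_ (hB.2 _).symm))
      refine sum_congr rfl fun r _ => ?_
      rcases Nat.eq_zero_or_pos r with rfl | hr
      · simp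
      · rw [ih _ (by omega)]

lemma conv (hA : IsExpCoeffs A α) (hB : IsExpCoeffs B β) :
    IsExpCoeffs (fun m => ∑ k ∈ range (m + 1), A k * B (m - k)) (fun r => α r + β r) := by
  rw [isExpCoeffs_iff] at *
  have hprod : PowerSeries.mk (fun m => ∑ k ∈ range (m + 1), A k * B (m - k)) =
      PowerSeries.mk A * PowerSeries.mk B := by
    ext m
    rw [coeff_mk, coeff_mk_mul_mk]
  have hsum : PowerSeries.mk (fun r => r * (α r + β r)) =
      PowerSeries.mk (fun r => r * α r) + PowerSeries.mk (fun r => r * β r) := by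
    ext m
    simp [mul_add]
  refine ⟨by simp [hA.1, hB.1], ?_⟩
  rw [hprod, Derivation.leibniz, smul_eq_mul, smul_eq_mul, hsum]
  linear_combination PowerSeries.mk B * hA.2 + PowerSeries.mk A * hB.2

lemma one : IsExpCoeffs 1 (fun r => (r : ℝ)⁻¹) := by
  refine ⟨rfl, fun m => ?_⟩
  rw [sum_range_succ']
  simp [mul_inv_cancel₀ (Nat.cast_add_one_ne_zero (R := ℝ) _)]

lemma partialSums (hA : IsExpCoeffs A α) :
    IsExpCoeffs (fun m => ∑ i ∈ range (m + 1), A i) (fun r => (r : ℝ)⁻¹ + α r) := by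
  convert one.conv hA using 1
  funext m
  rw [← sum_range_reflect]
  simp

end IsExpCoeffs

def partWeight (c : ℕ → ℝ) (s : Multiset ℕ) : ℝ :=
  ∏ r ∈ s.toFinset, c r ^ s.count r / (s.count r).factorial

/-- The coefficient of `x^m` in `exp (∑ c_r x^r)` (see `isExpCoeffs_expCoeff`). -/
def expCoeff (c : ℕ → ℝ) (m : ℕ) : ℝ :=
  ∑ π : Nat.Partition m, partWeight c π.parts

lemma partWeight_eq_prod_of_subset (c : ℕ → ℝ) {s : Multiset ℕ} {T : Finset ℕ}
    (hT : s.toFinset ⊆ T) :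
    partWeight c s = ∏ r ∈ T, c r ^ s.count r / (s.count r).factorial := by
  refine prod_subset hT fun r _ hr => ?_
  simp [Multiset.count_eq_zero.2 (by simpa using hr)]

lemma partWeight_nonneg {c : ℕ → ℝ} (hc : ∀ r, 0 ≤ c r) (s : Multiset ℕ) :
    0 ≤ partWeight c s :=
  prod_nonneg fun r _ => by have := hc r; positivity

lemma expCoeff_nonneg {c : ℕ → ℝ} (hc : ∀ r, 0 ≤ c r) (m : ℕ) : 0 ≤ expCoeff c m :=
  sum_nonneg fun π _ => partWeight_nonneg hc π.parts

lemma sum_filter_le_parts {A k : ℕ} (μ : Nat.Partition A) (hAk : A ≤ k)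
    (F : Multiset ℕ → ℝ) :
    ∑ ν ∈ univ.filter (fun ν : Nat.Partition k => μ.parts ≤ ν.parts),
        F (ν.parts - μ.parts)
      = ∑ ρ : Nat.Partition (k - A), F ρ.parts := by
  have hsum (ν : Nat.Partition k) (h : μ.parts ≤ ν.parts) :
      (ν.parts - μ.parts).sum = k - A := by
    have := congrArg Multiset.sum (tsub_add_cancel_of_le h)
    rw [Multiset.sum_add, ν.parts_sum, μ.parts_sum] at this
    omega
  refine sum_bij'
    (fun ν hν => ⟨ν.parts - μ.parts,
      fun hi => ν.parts_pos (Multiset.mem_of_le tsub_le_self hi), hsum ν (mem_filter.1 hν).2⟩)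
    (fun ρ _ => ⟨ρ.parts + μ.parts,
      fun hi => (Multiset.mem_add.1 hi).elim ρ.parts_pos μ.parts_pos,
      by rw [Multiset.sum_add, ρ.parts_sum, μ.parts_sum]; omega⟩)
    (fun _ _ => mem_univ _)
    (fun ρ _ => mem_filter.2 ⟨mem_univ _, Multiset.le_add_left _ _⟩)
    (fun ν hν => Nat.Partition.ext (tsub_add_cancel_of_le (mem_filter.1 hν).2))
    (fun ρ _ => Nat.Partition.ext (add_tsub_cancel_right _ _))
    (fun _ _ => rfl)

lemma count_mul_partWeight_cons (c : ℕ → ℝ) (r : ℕ) (s : Multiset ℕ) :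
    (r ::ₘ s).count r * partWeight c (r ::ₘ s) = c r * partWeight c s := by
  have hsub : s.toFinset ⊆ (r ::ₘ s).toFinset := by
    intro x; simp only [Multiset.mem_toFinset]; exact Multiset.mem_cons_of_mem
  have hr : r ∈ (r ::ₘ s).toFinset := by simp
  rw [partWeight, partWeight_eq_prod_of_subset c hsub, ← mul_prod_erase _ _ hr,
    ← mul_prod_erase _ (fun x => c x ^ s.count x / (s.count x).factorial) hr,
    prod_congr rfl fun x hx => by rw [Multiset.count_cons_of_ne (mem_erase.1 hx).1],
    Multiset.count_cons_self, Nat.factorial_succ]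
  push_cast
  field_simp
  ring

lemma Nat.Partition.sum_range_mul_count {m : ℕ} (π : Nat.Partition m) :
    ∑ r ∈ range (m + 1), (r * π.parts.count r : ℝ) = m := by
  have hsub : π.parts.toFinset ⊆ range (m + 1) := fun r hr => mem_range.2 <|
    Nat.lt_succ_of_le (π.parts_sum ▸ Multiset.le_sum_of_mem (Multiset.mem_toFinset.1 hr))
  rw [← sum_subset hsub fun r _ hr => by simp [Multiset.count_eq_zero.2 (by simpa using hr)]]
  exact_mod_cast by simpa [mul_comm] using (sum_multiset_count π.parts).symm.trans π.parts_sum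

lemma sum_count_mul_partWeight (c : ℕ → ℝ) {m r : ℕ} (hr : 0 < r) (hrm : r ≤ m) :
    ∑ π : Nat.Partition m, π.parts.count r * partWeight c π.parts =
      c r * expCoeff c (m - r) := by
  have hμ : (Nat.Partition.indiscrete r).parts = {r} := Nat.Partition.indiscrete_parts hr.ne'
  rw [← sum_filter_of_ne
      (p := fun π : Nat.Partition m => (Nat.Partition.indiscrete r).parts ≤ π.parts)
    fun π _ h => by simpa [hμ, Multiset.count_eq_zero] using left_ne_zero_of_mul h,
    expCoeff, mul_sum,
    ← sum_filter_le_parts _ hrm fun s => c r * partWeight c s]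
  refine sum_congr rfl fun π hπ => ?_
  have hmem : r ∈ π.parts := by simpa [hμ] using (mem_filter.1 hπ).2
  rw [hμ, Multiset.sub_singleton, ← count_mul_partWeight_cons, Multiset.cons_erase hmem]

lemma isExpCoeffs_expCoeff (c : ℕ → ℝ) : IsExpCoeffs (expCoeff c) c := by
  refine ⟨by simp [expCoeff, partWeight], fun m => ?_⟩
  calc (m : ℝ) * expCoeff c m
      = ∑ r ∈ range (m + 1),
          r * ∑ π : Nat.Partition m, π.parts.count r * partWeight c π.parts := by
        simp only [expCoeff, mul_sum]
        rw [sum_comm]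
        refine sum_congr rfl fun π _ => ?_
        rw [← π.sum_range_mul_count, sum_mul]
        exact sum_congr rfl fun r _ => by ring
    _ = ∑ r ∈ range (m + 1), r * c r * expCoeff c (m - r) := by
        refine sum_congr rfl fun r hr => ?_
        rcases Nat.eq_zero_or_pos r with rfl | hr0
        · simp
        · rw [sum_count_mul_partWeight c hr0 (by simpa [Nat.lt_succ_iff] using hr), mul_assoc]

lemma sum_expCoeff_mul_expCoeff (a b : ℕ → ℝ) (M : ℕ) :
    ∑ j ∈ range (M + 1), expCoeff a j * expCoeff b (M - j)
      = ∑ i ∈ range (M + 1), expCoeff (fun r => a r + b r - (r : ℝ)⁻¹) i := by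
  have hδ := (isExpCoeffs_expCoeff fun r => a r + b r - (r : ℝ)⁻¹).partialSums
  simp only [add_sub_cancel] at hδ
  exact congrFun (((isExpCoeffs_expCoeff a).conv (isExpCoeffs_expCoeff b)).unique hδ) M

lemma sum_range_ite_mul_ite (g h : ℕ → ℝ) (A B n : ℕ) :
    ∑ k ∈ range (n + 1),
        (if A ≤ k then g (k - A) else 0) * (if B ≤ n - k then h (n - k - B) else 0)
      = if A + B ≤ n then ∑ j ∈ range (n - (A + B) + 1), g j * h (n - (A + B) - j)
        else 0 := by
  have hshift (K : ℕ) (f : ℕ → ℝ) :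
      PowerSeries.mk (fun k => if K ≤ k then f (k - K) else 0) = X ^ K * PowerSeries.mk f := by
    ext k
    rw [coeff_X_pow_mul', coeff_mk, coeff_mk]
  refine (coeff_mk_mul_mk (fun k => if A ≤ k then g (k - A) else 0)
    (fun k => if B ≤ k then h (k - B) else 0) n).symm.trans ?_
  rw [hshift, hshift, mul_mul_mul_comm, ← pow_add, coeff_X_pow_mul', coeff_mk_mul_mk]

def scaledInv (u : ℕ → ℝ) (r : ℕ) : ℝ := (2 * r * u r)⁻¹

def fTerm (u : ℕ → ℝ) (μ s : Multiset ℕ) : ℝ :=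
  binomOf s μ / vOf s * ∏ r ∈ s.toFinset, (u r)⁻¹ ^ s.count r

lemma fEval_eq_sum_mul (μ κ : Multiset ℕ) (n : ℕ) (z : ℝ) :
    fEval μ κ n z = ∑ k ∈ range (n + 1),
      (∑ ν : Nat.Partition k, fTerm (fun r => 1 - z ^ r) μ ν.parts) *
      (∑ ρ : Nat.Partition (n - k), fTerm (fun r => 1 + z ^ r) κ ρ.parts) := by
  refine sum_congr rfl fun k _ => ?_
  rw [sum_mul_sum]
  refine sum_congr rfl fun ν _ => sum_congr rfl fun ρ _ => ?_
  simp only [fTerm, div_eq_mul_inv, mul_inv]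
  ring

lemma fTerm_eq_zero_of_not_le {u : ℕ → ℝ} {μ s : Multiset ℕ} (h : ¬ μ ≤ s) :
    fTerm u μ s = 0 := by
  obtain ⟨r, hr⟩ := not_forall.1 (mt Multiset.le_iff_count.2 h)
  have hmem : r ∈ μ.toFinset := Multiset.mem_toFinset.2 (Multiset.count_pos.1 (by omega))
  have hbinom : binomOf s μ = 0 := prod_eq_zero hmem (Nat.choose_eq_zero_of_lt (by omega))
  simp [fTerm, hbinom]

lemma choose_div_factorial_mul_pow_mul_inv_pow {a b : ℕ} (hba : b ≤ a) (c u : ℝ) :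
    (a.choose b : ℝ) / (a.factorial * c ^ a) * u⁻¹ ^ a
      = (c * u)⁻¹ ^ b / b.factorial * ((c * u)⁻¹ ^ (a - b) / (a - b).factorial) := by
  rw [Nat.cast_choose ℝ hba, div_mul_div_comm, ← pow_add, Nat.add_sub_cancel' hba, mul_inv,
    mul_pow, inv_pow]
  field_simp
  ring

lemma fTerm_eq_mul_partWeight (u : ℕ → ℝ) {μ s : Multiset ℕ} (hle : μ ≤ s) :
    fTerm u μ s = partWeight (scaledInv u) μ * partWeight (scaledInv u) (s - μ) := by
  have hμ : μ.toFinset ⊆ s.toFinset := Multiset.toFinset_subset.2 (Multiset.subset_of_le hle)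
  have hsμ : (s - μ).toFinset ⊆ s.toFinset :=
    Multiset.toFinset_subset.2 (Multiset.subset_of_le tsub_le_self)
  have hbinom :
      (binomOf s μ : ℝ) = ∏ r ∈ s.toFinset, ((s.count r).choose (μ.count r) : ℝ) := by
    rw [binomOf, Nat.cast_prod]
    exact prod_subset hμ fun r _ hr => by simp [Multiset.count_eq_zero.2 (by simpa using hr)]
  have hv :
      (vOf s : ℝ) = ∏ r ∈ s.toFinset, (s.count r).factorial * (2 * r : ℝ) ^ s.count r := by
    simp [vOf]
  rw [fTerm, hbinom, hv, ← prod_div_distrib, ← prod_mul_distrib,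
    partWeight_eq_prod_of_subset _ hμ, partWeight_eq_prod_of_subset _ hsμ, ← prod_mul_distrib]
  refine prod_congr rfl fun r _ => ?_
  rw [Multiset.count_sub, choose_div_factorial_mul_pow_mul_inv_pow (Multiset.le_iff_count.1 hle r),
    scaledInv]

lemma sum_fTerm (u : ℕ → ℝ) {A : ℕ} (μ : Nat.Partition A) (k : ℕ) :
    ∑ ν : Nat.Partition k, fTerm u μ.parts ν.parts
      = if A ≤ k then partWeight (scaledInv u) μ.parts * expCoeff (scaledInv u) (k - A)
        else 0 := by
  rw [← sum_filter_of_ne (p := fun ν : Nat.Partition k => μ.parts ≤ ν.parts)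
    fun ν _ => not_imp_comm.1 fTerm_eq_zero_of_not_le]
  split_ifs with hAk
  · rw [sum_congr rfl fun ν hν => fTerm_eq_mul_partWeight u (mem_filter.1 hν).2, ← mul_sum,
      sum_filter_le_parts μ hAk, expCoeff]
  · refine sum_eq_zero fun ν hν => absurd ?_ hAk
    have := congrArg Multiset.sum (tsub_add_cancel_of_le (mem_filter.1 hν).2)
    rw [Multiset.sum_add, ν.parts_sum, μ.parts_sum] at this
    omega

lemma fEval_eq {A B : ℕ} (μ : Nat.Partition A) (κ : Nat.Partition B) (n : ℕ) (z : ℝ) :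
    fEval μ.parts κ.parts n z = if A + B ≤ n then
      partWeight (scaledInv fun r => 1 - z ^ r) μ.parts *
        partWeight (scaledInv fun r => 1 + z ^ r) κ.parts *
        ∑ i ∈ range (n - (A + B) + 1), expCoeff (fun r =>
          scaledInv (fun r => 1 - z ^ r) r + scaledInv (fun r => 1 + z ^ r) r - (r : ℝ)⁻¹) i
      else 0 := by
  simp only [fEval_eq_sum_mul, sum_fTerm]
  refine (sum_range_ite_mul_ite
    (fun j => partWeight (scaledInv fun r => 1 - z ^ r) μ.parts *
      expCoeff (scaledInv fun r => 1 - z ^ r) j)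
    (fun j => partWeight (scaledInv fun r => 1 + z ^ r) κ.parts *
      expCoeff (scaledInv fun r => 1 + z ^ r) j) A B n).trans ?_
  split_ifs
  · rw [← sum_expCoeff_mul_expCoeff, mul_sum]
    exact sum_congr rfl fun j _ => by ring
  · rfl

lemma scaledInv_nonneg {u : ℕ → ℝ} (hu : ∀ r, 0 ≤ u r) (r : ℕ) :
    0 ≤ scaledInv u r := by
  have := hu r
  unfold scaledInv
  positivity

lemma inv_le_scaledInv_add_scaledInv {z : ℝ} (hz : |z| < 1) (r : ℕ) :
    (r : ℝ)⁻¹ ≤ scaledInv (fun r => 1 - z ^ r) r + scaledInv (fun r => 1 + z ^ r) r := by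
  rcases Nat.eq_zero_or_pos r with rfl | hr
  · simp [scaledInv]
  obtain ⟨ht₁, ht₂⟩ :=
    abs_lt.1 ((abs_pow z r).symm ▸ pow_lt_one₀ (abs_nonneg z) hz hr.ne')
  have hr' : (0 : ℝ) < r := Nat.cast_pos.2 hr
  have hminus : 0 < 1 - z ^ r := by linarith
  have hplus : 0 < 1 + z ^ r := by linarith
  have hsum : scaledInv (fun r => 1 - z ^ r) r + scaledInv (fun r => 1 + z ^ r) r
      = (r * (1 - z ^ r) * (1 + z ^ r))⁻¹ := by
    simp only [scaledInv]
    field_simp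
    ring
  rw [hsum]
  exact inv_anti₀ (by positivity) (by nlinarith [mul_nonneg hr'.le (sq_nonneg (z ^ r))])

lemma monotone_ite_mul_sum_range {K : ℕ} {C : ℝ} {E : ℕ → ℝ} (hC : 0 ≤ C)
    (hE : ∀ i, 0 ≤ E i) :
    Monotone fun n => if K ≤ n then C * ∑ i ∈ range (n - K + 1), E i else 0 := by
  intro m n hmn
  dsimp only
  split_ifs with hm hn hn
  · exact mul_le_mul_of_nonneg_left
      (sum_le_sum_of_subset_of_nonneg (range_mono (by omega)) fun i _ _ => hE i) hC
  · omega
  · exact mul_nonneg hC (sum_nonneg fun i _ => hE i)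
  · rfl

end

/-- The monotonicity step in the proof of Corollary 1.11: for a fixed double partition
`(μ,λ)` and any real `z` with `|z| ≤ 1/2`, the sequence `n ↦ f_n(z)` is monotone
nondecreasing, i.e. `f_{n-1}(z) ≤ f_n(z)` for all `n ≥ 1`. -/
theorem fEval_monotone (A B : ℕ) (mu : Nat.Partition A) (lam : Nat.Partition B)
    (z : ℝ) (hz : |z| ≤ 1 / 2) :
    ∀ n : ℕ, 1 ≤ n → fEval mu.parts lam.parts (n - 1) z ≤ fEval mu.parts lam.parts n z := by
  intro n _
  have hz1 : |z| < 1 := by linarith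
  have hpow (r : ℕ) : |z ^ r| ≤ 1 := (abs_pow z r).symm ▸ pow_le_one₀ (abs_nonneg z) hz1.le
  have hweights := mul_nonneg
    (partWeight_nonneg (scaledInv_nonneg (u := fun r => 1 - z ^ r) fun r => by
      linarith [abs_le.1 (hpow r)]) mu.parts)
    (partWeight_nonneg (scaledInv_nonneg (u := fun r => 1 + z ^ r) fun r => by
      linarith [abs_le.1 (hpow r)]) lam.parts)
  have hexcess := expCoeff_nonneg fun r => sub_nonneg.2 (inv_le_scaledInv_add_scaledInv hz1 r)
  simp only [fEval_eq]
  exact monotone_ite_mul_sum_range hweights hexcess (Nat.sub_le n 1)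
end
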